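/- arXiv:2310.20239 — 6 statements merged into one kernel-verified Lean document; each statement's English description precedes it below -/
import Mathlib

section
/- The MN array P, a C(K, μK) × K array indexed by rows D ∈ C([K], μK) (the μK-subsets of [K]) and columns k ∈ [K], defined by P(D,k) = * if k ∈ D and P(D,k) = D ∪ {k} (equivalently its lexicographic order φ(D∪{k}) in C([K], μK+1)) otherwise, is a (K, C(K,μK), C(K-1,μK-1), C(K,μK+1)) placement delivery array. -/
/-- The MN array `P`, with rows the `μK`-subsets `D` of `[K]` and columns `k ∈ [K]`,
defined by `P(D,k) = *` if `k ∈ D` and `P(D,k) = D ∪ {k}` otherwise, is a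
`(K, C(K,μK), C(K-1,μK-1), C(K,μK+1))` placement delivery array:
(C1) each column has exactly `C(K-1, μK-1)` stars (and there are `C(K,μK)` rows);
(C2) each of the `C(K, μK+1)` possible integer values (the `(μK+1)`-subsets of `[K]`)
occurs at least once, and every non-star entry is such a `(μK+1)`-subset;
(C3) two distinct entries filled with the same set lie in distinct rows and distinct
columns, and the two cross entries are stars. -/
theorem stmt_7 (K μK : ℕ) (hμ : 1 ≤ μK) (hμK : μK ≤ K) :
    (∀ k : Fin K,
      ((Finset.univ : Finset (Finset (Fin K))).filter
        fun D => D.card = μK ∧ k ∈ D).card = (K - 1).choose (μK - 1)) ∧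
    (((Finset.univ : Finset (Finset (Fin K))).filter
        fun D => D.card = μK).card = K.choose μK) ∧
    (∀ S : Finset (Fin K), S.card = μK + 1 →
      ∃ (D : Finset (Fin K)) (k : Fin K), D.card = μK ∧ k ∉ D ∧ insert k D = S) ∧
    (∀ (D : Finset (Fin K)) (k : Fin K), D.card = μK → k ∉ D →
      (insert k D).card = μK + 1) ∧
    (((Finset.univ : Finset (Finset (Fin K))).filter
        fun S => S.card = μK + 1).card = K.choose (μK + 1)) ∧
    (∀ (D₁ D₂ : Finset (Fin K)) (k₁ k₂ : Fin K),
      D₁.card = μK → D₂.card = μK → k₁ ∉ D₁ → k₂ ∉ D₂ →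
      (D₁, k₁) ≠ (D₂, k₂) → insert k₁ D₁ = insert k₂ D₂ →
      D₁ ≠ D₂ ∧ k₁ ≠ k₂ ∧ k₂ ∈ D₁ ∧ k₁ ∈ D₂) := by
  have hfilter : ∀ n : ℕ, ((Finset.univ : Finset (Finset (Fin K))).filter
      fun D => D.card = n).card = K.choose n := by
    intro n
    have : (Finset.univ : Finset (Finset (Fin K))).filter (fun D => D.card = n)
        = Finset.powersetCard n (Finset.univ : Finset (Fin K)) := by
      ext D
      simp [Finset.mem_powersetCard]

    rw [this, Finset.card_powersetCard, Finset.card_univ, Fintype.card_fin]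
  refine ⟨?_, hfilter μK, ?_, ?_, hfilter (μK + 1), ?_⟩
  · intro k
    have hcard : ((Finset.univ : Finset (Fin K)).erase k).card = K - 1 := by
      rw [Finset.card_erase_of_mem (Finset.mem_univ k), Finset.card_univ, Fintype.card_fin]
    rw [← hcard, ← Finset.card_powersetCard]
    apply Finset.card_bij (fun D _ => D.erase k)
    · intro D hD
      simp only [Finset.mem_filter, Finset.mem_univ, true_and] at hD
      rw [Finset.mem_powersetCard]
      constructor
      · intro x hx
        simp only [Finset.mem_erase] at hx ⊢
        exact ⟨hx.1, Finset.mem_univ x⟩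
      · rw [Finset.card_erase_of_mem hD.2, hD.1]
    · intro D₁ h₁ D₂ h₂ h
      simp only [Finset.mem_filter, Finset.mem_univ, true_and] at h₁ h₂
      have := congrArg (insert k) h
      rwa [Finset.insert_erase h₁.2, Finset.insert_erase h₂.2] at this
    · intro E hE
      rw [Finset.mem_powersetCard] at hE
      refine ⟨insert k E, ?_, ?_⟩
      · have hkE : k ∉ E := fun h => (Finset.mem_erase.mp (hE.1 h)).1 rfl
        simp only [Finset.mem_filter, Finset.mem_univ, true_and]
        exact ⟨by rw [Finset.card_insert_of_notMem hkE, hE.2]; omega,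
          Finset.mem_insert_self k E⟩
      · have hkE : k ∉ E := fun h => (Finset.mem_erase.mp (hE.1 h)).1 rfl
        rw [Finset.erase_insert hkE]
  · intro S hS
    have hne : S.Nonempty := Finset.card_pos.mp (by omega)
    obtain ⟨k, hk⟩ := hne
    refine ⟨S.erase k, k, ?_, Finset.notMem_erase k S, Finset.insert_erase hk⟩
    rw [Finset.card_erase_of_mem hk, hS]; omega
  · intro D k hD hk
    rw [Finset.card_insert_of_notMem hk, hD]
  · intro D₁ D₂ k₁ k₂ h₁ h₂ hk₁ hk₂ hne heq
    have hDne : D₁ ≠ D₂ := by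
      intro hDD
      subst hDD
      have : k₁ ∈ insert k₂ D₁ := heq ▸ Finset.mem_insert_self k₁ D₁
      rcases Finset.mem_insert.mp this with h | h
      · exact hne (by rw [h])
      · exact hk₁ h
    have hkne : k₁ ≠ k₂ := by
      intro hkk
      subst hkk
      apply hDne
      have := congrArg (fun s => Finset.erase s k₁) heq
      simpa [Finset.erase_insert hk₁, Finset.erase_insert hk₂] using this
    refine ⟨hDne, hkne, ?_, ?_⟩
    · have : k₂ ∈ insert k₁ D₁ := heq ▸ Finset.mem_insert_self k₂ D₂
      rcases Finset.mem_insert.mp this with h | h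
      · exact absurd h.symm hkne
      · exact h
    · have : k₁ ∈ insert k₂ D₂ := heq ▸ Finset.mem_insert_self k₁ D₁
      rcases Finset.mem_insert.mp this with h | h
      · exact absurd h hkne
      · exact h
end

section
/- Let (X, B) be a t-(Γ, L, 1) design with Γ points and parameter μΓ ∈ ℕ, μΓ ≤ Γ - L. Define the array Q with rows indexed by pairs (D, T) where D is a μΓ-subset of X and T is a t-subset of [L], and columns indexed by blocks B ∈ B, by Q((D,T), B) = * if D ∩ B ≠ ∅, and Q((D,T), B) = D ∪ B(T) otherwise, where B(T) is the set of elements of B at positions in T (under the sorted order of B). Then: for any two distinct entries with Q((D,T),B) = Q((D',T'),B') = S a set, the entries lie in distinct rows and distinct columns and Q((D,T),B') = Q((D',T'),B) = *. -/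
/-- PDA condition C3 for the user-delivery array of the `t`-design MACC scheme:
for a `t`-`(Γ,L,1)` design, with `Q((D,T),B) = D ∪ B(T)` when `D ∩ B = ∅` (star
otherwise), any two distinct entries carrying the same set lie in distinct rows and
distinct columns, and the two cross entries are stars (`D ∩ B' ≠ ∅` and `D' ∩ B ≠ ∅`). -/
theorem stmt_9 (Γ L t μΓ : ℕ) (ht : 1 ≤ t) (hμ : μΓ ≤ Γ - L)
    (𝔅 : Finset (Finset (Fin Γ)))
    (hcard : ∀ B ∈ 𝔅, B.card = L)
    (hdesign : ∀ T : Finset (Fin Γ), T.card = t → ∃! B, B ∈ 𝔅 ∧ T ⊆ B) :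
    ∀ (D D' : Finset (Fin Γ)) (T T' : Finset (Fin L))
      (B : Finset (Fin Γ)) (hB : B ∈ 𝔅) (B' : Finset (Fin Γ)) (hB' : B' ∈ 𝔅),
      D.card = μΓ → D'.card = μΓ → T.card = t → T'.card = t →
      D ∩ B = ∅ → D' ∩ B' = ∅ →
      D ∪ T.image (fun i => B.orderEmbOfFin (hcard B hB) i)
        = D' ∪ T'.image (fun i => B'.orderEmbOfFin (hcard B' hB') i) →
      (D, T, B) ≠ (D', T', B') →
      ((D, T) ≠ (D', T') ∧ B ≠ B' ∧ (D ∩ B').Nonempty ∧ (D' ∩ B).Nonempty) := by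
  intro D D' T T' B hB B' hB' hDc hD'c hTc hT'c hDB hD'B' hS hne
  classical
  set f : Fin L → Fin Γ := fun i => B.orderEmbOfFin (hcard B hB) i with hf
  set g : Fin L → Fin Γ := fun i => B'.orderEmbOfFin (hcard B' hB') i with hg
  have hfinj : Function.Injective f := fun a b h =>
    (B.orderEmbOfFin (hcard B hB)).injective h
  have hIB : T.image f ⊆ B := by
    intro x hx
    obtain ⟨i, _, rfl⟩ := Finset.mem_image.mp hx
    exact Finset.orderEmbOfFin_mem B (hcard B hB) i
  have hIB' : T'.image g ⊆ B' := by
    intro x hx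
    obtain ⟨i, _, rfl⟩ := Finset.mem_image.mp hx
    exact Finset.orderEmbOfFin_mem B' (hcard B' hB') i
  have hDdisj : ∀ x ∈ D, x ∉ B := by
    intro x hx hxB
    have : x ∈ D ∩ B := Finset.mem_inter.mpr ⟨hx, hxB⟩
    simp [hDB] at this
  have hD'disj : ∀ x ∈ D', x ∉ B' := by
    intro x hx hxB
    have : x ∈ D' ∩ B' := Finset.mem_inter.mpr ⟨hx, hxB⟩
    simp [hD'B'] at this
  -- I = S \ D and I' = S \ D'
  have hIS : (D ∪ T.image f) \ D = T.image f := by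
    ext x
    simp only [Finset.mem_sdiff, Finset.mem_union]
    constructor
    · rintro ⟨h1 | h1, h2⟩
      · exact absurd h1 h2
      · exact h1
    · intro hx
      exact ⟨Or.inr hx, fun hxD => hDdisj x hxD (hIB hx)⟩
  have hI'S : (D' ∪ T'.image g) \ D' = T'.image g := by
    ext x
    simp only [Finset.mem_sdiff, Finset.mem_union]
    constructor
    · rintro ⟨h1 | h1, h2⟩
      · exact absurd h1 h2
      · exact h1
    · intro hx
      exact ⟨Or.inr hx, fun hxD => hD'disj x hxD (hIB' hx)⟩
  -- key: D = D' leads to contradiction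
  have key : D = D' → False := by
    intro hDD
    have hII' : T.image f = T'.image g := by
      rw [← hIS, ← hI'S, hS, hDD]
    have hcardI : (T.image f).card = t := by
      rw [Finset.card_image_of_injective _ hfinj, hTc]
    obtain ⟨Bu, hBu, huniq⟩ := hdesign (T.image f) hcardI
    have h1 : Bu = B := (huniq B ⟨hB, hIB⟩).symm
    have h2 : Bu = B' := (huniq B' ⟨hB', by rw [hII']; exact hIB'⟩).symm
    have hBB' : B = B' := h1 ▸ h2
    subst hBB'
    have hfg : f = g := rfl
    have hTT' : T = T' := by
      apply Finset.image_injective hfinj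
      rw [hII', hfg]
    exact hne (by rw [hDD, hTT'])
  refine ⟨fun h => key (congrArg Prod.fst h), ?_, ?_, ?_⟩
  · -- B ≠ B'
    intro hBB'
    subst hBB'
    apply key
    have hDS : (D ∪ T.image f) \ B = D := by
      ext x
      simp only [Finset.mem_sdiff, Finset.mem_union]
      constructor
      · rintro ⟨h1 | h1, h2⟩
        · exact h1
        · exact absurd (hIB h1) h2
      · intro hx
        exact ⟨Or.inl hx, hDdisj x hx⟩
    have hD'S : (D' ∪ T'.image g) \ B = D' := by
      ext x
      simp only [Finset.mem_sdiff, Finset.mem_union]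
      constructor
      · rintro ⟨h1 | h1, h2⟩
        · exact h1
        · exact absurd (hIB' h1) h2
      · intro hx
        exact ⟨Or.inl hx, hD'disj x hx⟩
    rw [← hDS, ← hD'S, hS]
  · -- (D ∩ B').Nonempty
    rw [Finset.nonempty_iff_ne_empty]
    intro hDB'
    apply key
    have hsub : D ⊆ D' := by
      intro x hx
      have hxS : x ∈ D' ∪ T'.image g := by rw [← hS]; exact Finset.mem_union_left _ hx
      rcases Finset.mem_union.mp hxS with h | h
      · exact h
      · exfalso
        have : x ∈ D ∩ B' := Finset.mem_inter.mpr ⟨hx, hIB' h⟩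
        simp [hDB'] at this
    exact Finset.eq_of_subset_of_card_le hsub (by rw [hDc, hD'c])
  · -- (D' ∩ B).Nonempty
    rw [Finset.nonempty_iff_ne_empty]
    intro hD'B
    apply key
    have hsub : D' ⊆ D := by
      intro x hx
      have hxS : x ∈ D ∪ T.image f := by rw [hS]; exact Finset.mem_union_left _ hx
      rcases Finset.mem_union.mp hxS with h | h
      · exact h
      · exfalso
        have : x ∈ D' ∩ B := Finset.mem_inter.mpr ⟨hx, hIB h⟩
        simp [hD'B] at this
    exact (Finset.eq_of_subset_of_card_le hsub (by rw [hDc, hD'c])).symm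
end

section
/- Let (X,B) be a t-(Γ,L,1) design with K = C(Γ,t)/C(L,t) blocks, and let S be a (t+μΓ)-subset of X that is contained in some block B ∈ B. Then S never occurs as an entry of the user-delivery array Q; i.e., there is no pair (D, T) with D a μΓ-subset of X, T a t-subset of [L], and block B' ∈ B such that D ∩ B' = ∅ and D ∪ B'(T) = S. -/
/-- In a `t`-`(Γ,L,1)` design, a `(t+μΓ)`-subset `S` contained in some block never occurs
as an entry of the user-delivery array `Q`: there is no row `(D,T)` and block `B'` with
`D ∩ B' = ∅` and `D ∪ B'(T) = S`. -/
theorem stmt_10 (Γ L t μΓ : ℕ) (ht : 1 ≤ t) (hμ : 1 ≤ μΓ) (hL : t + μΓ ≤ L)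
    (𝔅 : Finset (Finset (Fin Γ)))
    (hcard : ∀ B ∈ 𝔅, B.card = L)
    (hdesign : ∀ T : Finset (Fin Γ), T.card = t → ∃! B, B ∈ 𝔅 ∧ T ⊆ B)
    (S : Finset (Fin Γ)) (hS : S.card = t + μΓ) (hSB : ∃ B ∈ 𝔅, S ⊆ B) :
    ∀ (D : Finset (Fin Γ)) (T : Finset (Fin L))
      (B' : Finset (Fin Γ)) (hB' : B' ∈ 𝔅),
      D.card = μΓ → T.card = t → D ∩ B' = ∅ →
      D ∪ T.image (fun i => B'.orderEmbOfFin (hcard B' hB') i) ≠ S := by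
  intro D T B' hB' hD hT hdisj heq
  obtain ⟨B, hB, hSsub⟩ := hSB
  set I : Finset (Fin Γ) := T.image (fun i => B'.orderEmbOfFin (hcard B' hB') i) with hI
  have hIcard : I.card = t := by
    rw [hI, Finset.card_image_of_injective _ (B'.orderEmbOfFin (hcard B' hB')).injective, hT]
  have hIB' : I ⊆ B' := by
    intro x hx
    rw [hI] at hx
    obtain ⟨i, _, rfl⟩ := Finset.mem_image.mp hx
    exact Finset.orderEmbOfFin_mem _ _ _
  have hIB : I ⊆ B := fun x hx => hSsub (heq ▸ Finset.mem_union_right _ hx)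
  obtain ⟨Bu, _, huniq⟩ := hdesign I hIcard
  have hBB' : B = B' := (huniq B ⟨hB, hIB⟩).trans (huniq B' ⟨hB', hIB'⟩).symm
  have hDne : D.Nonempty := Finset.card_pos.mp (by omega)
  obtain ⟨d, hd⟩ := hDne
  have hdB' : d ∈ B' := by
    rw [← hBB']; exact hSsub (heq ▸ Finset.mem_union_left _ hd)
  have : d ∈ D ∩ B' := Finset.mem_inter.mpr ⟨hd, hdB'⟩
  rw [hdisj] at this
  exact absurd this (Finset.notMem_empty d)
end

section
/- The dual of a t-cross resolvable design is a group divisible design: if (V, A) is a resolvable design with |V| = v, block size k, Γ blocks partitioned into m parallel classes each of q = v/k blocks, such that the intersection of any t blocks from t distinct parallel classes has size exactly λ_t, then the dual incidence structure (with points the blocks of A, groups the parallel classes, and for each point j ∈ V the block {A ∈ A : j ∈ A}) is a t-(m, q, m, λ_t) GDD. -/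
/-- The dual of a `t`-cross `(v,k,Γ,m,λ_t)` resolvable design is a `t`-`(m,q,m,λ_t)` GDD,
where `q = v/k`: taking as dual points the pairs `(u, b)` with `b` a block of the `u`-th
parallel class, as groups the parallel classes, and as dual blocks the sets
`B_j = {(u,b) : j ∈ b}` for `j ∈ V`, one obtains `m` groups of size `q` partitioning a set
of `m * q` dual points, every dual block has size `m` and meets every group in at most one
point, and every `t`-subset of dual points from `t` distinct groups lies in exactly `λ_t`
dual blocks. -/
theorem stmt_14 {V : Type*} [Fintype V] [DecidableEq V]
    (v k Γb m q lam t : ℕ)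
    (hv : Fintype.card V = v) (hk : 0 < k) (hq : 0 < q)
    (hvk : v = k * q) (hΓ : Γb = m * q) (ht : 1 ≤ t) (htm : t ≤ m)
    (P : Fin m → Finset (Finset V))
    (hclasscard : ∀ u, (P u).card = q)
    (hblockcard : ∀ u, ∀ b ∈ P u, b.card = k)
    (hpart : ∀ u, ∀ x : V, ∃! b, b ∈ P u ∧ x ∈ b)
    (hcross : ∀ T : Finset (Fin m), T.card = t → ∀ f : Fin m → Finset V,
      (∀ u ∈ T, f u ∈ P u) → (T.inf f).card = lam) :
    -- the dual point set has `m * q = Γ` points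
    (((Finset.univ : Finset (Fin m × Finset V)).filter
        fun p => p.2 ∈ P p.1).card = Γb) ∧
    -- each group (parallel class) has `q` dual points
    (∀ u : Fin m,
      (((Finset.univ : Finset (Fin m × Finset V)).filter
        fun p => p.2 ∈ P p.1 ∧ p.1 = u).card = q)) ∧
    -- each dual block `B_j` has exactly `m` points
    (∀ j : V,
      (((Finset.univ : Finset (Fin m × Finset V)).filter
        fun p => p.2 ∈ P p.1 ∧ j ∈ p.2).card = m)) ∧
    -- each dual block meets each group in at most one point
    (∀ (j : V) (u : Fin m),
      (((Finset.univ : Finset (Fin m × Finset V)).filter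
        fun p => p.2 ∈ P p.1 ∧ j ∈ p.2 ∧ p.1 = u).card ≤ 1)) ∧
    -- every `t`-subset of dual points from `t` distinct groups lies in exactly
    -- `λ_t` dual blocks
    (∀ T : Finset (Fin m × Finset V), (∀ p ∈ T, p.2 ∈ P p.1) →
      T.card = t → (T.image Prod.fst).card = t →
      ((Finset.univ : Finset V).filter fun j => ∀ p ∈ T, j ∈ p.2).card = lam) := by

  classical
  -- group fibers
  have h2 : ∀ u : Fin m,
      ((Finset.univ : Finset (Fin m × Finset V)).filter
        fun p => p.2 ∈ P p.1 ∧ p.1 = u) = (P u).image fun b => (u, b) := by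
    intro u
    ext p
    simp only [Finset.mem_filter, Finset.mem_univ, true_and, Finset.mem_image]
    constructor
    · rintro ⟨h1, rfl⟩
      exact ⟨p.2, h1, rfl⟩
    · rintro ⟨b, hb, rfl⟩
      exact ⟨hb, rfl⟩
  have h2c : ∀ u : Fin m,
      ((Finset.univ : Finset (Fin m × Finset V)).filter
        fun p => p.2 ∈ P p.1 ∧ p.1 = u).card = q := by
    intro u
    rw [h2, Finset.card_image_of_injective _ (by intro a b h; simpa using h),
      hclasscard]
  -- uniqueness singletons
  have huniq : ∀ (j : V) (u : Fin m),
      ((Finset.univ : Finset (Fin m × Finset V)).filter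
        fun p => (p.2 ∈ P p.1 ∧ j ∈ p.2) ∧ p.1 = u) =
        {(u, (hpart u j).choose)} := by
    intro j u
    obtain ⟨⟨hb1, hb2⟩, hbu⟩ := (hpart u j).choose_spec
    ext p
    simp only [Finset.mem_filter, Finset.mem_univ, true_and, Finset.mem_singleton]
    constructor
    · rintro ⟨⟨hp1, hp2⟩, hpu⟩
      have h2 := hbu p.2 ⟨by rw [← hpu]; exact hp1, hp2⟩
      exact Prod.ext hpu h2
    · rintro rfl
      exact ⟨⟨hb1, hb2⟩, rfl⟩
  refine ⟨?_, h2c, ?_, ?_, ?_⟩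
  · -- total count
    rw [Finset.card_eq_sum_card_fiberwise
      (f := Prod.fst) (t := (Finset.univ : Finset (Fin m)))
      (fun x _ => Finset.mem_univ _)]
    have : ∀ u : Fin m,
        ((((Finset.univ : Finset (Fin m × Finset V)).filter
          fun p => p.2 ∈ P p.1)).filter fun p => p.1 = u).card = q := by
      intro u
      rw [Finset.filter_filter]
      exact h2c u
    rw [Finset.sum_congr rfl fun u _ => this u]
    simp [hΓ, mul_comm]
  · -- each dual block has m points
    intro j
    rw [Finset.card_eq_sum_card_fiberwise
      (f := Prod.fst) (t := (Finset.univ : Finset (Fin m)))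
      (fun x _ => Finset.mem_univ _)]
    have : ∀ u : Fin m,
        ((((Finset.univ : Finset (Fin m × Finset V)).filter
          fun p => p.2 ∈ P p.1 ∧ j ∈ p.2)).filter fun p => p.1 = u).card = 1 := by
      intro u
      rw [Finset.filter_filter, huniq j u]
      simp
    rw [Finset.sum_congr rfl fun u _ => this u]
    simp
  · -- at most one per group
    intro j u
    have : ((Finset.univ : Finset (Fin m × Finset V)).filter
        fun p => p.2 ∈ P p.1 ∧ j ∈ p.2 ∧ p.1 = u) =
        ((Finset.univ : Finset (Fin m × Finset V)).filter
        fun p => (p.2 ∈ P p.1 ∧ j ∈ p.2) ∧ p.1 = u) := by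
      apply Finset.filter_congr
      intro p _
      simp [and_assoc]
    rw [this, huniq j u]
    simp
  · -- cross intersection
    intro T hTP hTt hTim
    have hinj : Set.InjOn Prod.fst (T : Set (Fin m × Finset V)) := by
      exact Finset.injOn_of_card_image_eq (by rw [hTim, hTt])
    set f : Fin m → Finset V := fun u =>
      if h : ∃ p ∈ T, p.1 = u then h.choose.2 else ∅ with hf
    have hfval : ∀ p ∈ T, f p.1 = p.2 := by
      intro p hp
      have hex : ∃ q ∈ T, q.1 = p.1 := ⟨p, hp, rfl⟩
      rw [hf]
      simp only [dif_pos hex]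
      obtain ⟨hq1, hq2⟩ := hex.choose_spec
      have := hinj hq1 hp hq2
      rw [this]
    have hmem : ∀ u ∈ T.image Prod.fst, f u ∈ P u := by
      intro u hu
      obtain ⟨p, hp, rfl⟩ := Finset.mem_image.mp hu
      rw [hfval p hp]
      exact hTP p hp
    have key := hcross (T.image Prod.fst) hTim f hmem
    have : ((Finset.univ : Finset V).filter fun j => ∀ p ∈ T, j ∈ p.2) =
        (T.image Prod.fst).inf f := by
      ext j
      simp only [Finset.mem_filter, Finset.mem_univ, true_and, Finset.mem_inf]
      constructor
      · intro h u hu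
        obtain ⟨p, hp, rfl⟩ := Finset.mem_image.mp hu
        rw [hfval p hp]
        exact h p hp
      · intro h p hp
        have := h p.1 (Finset.mem_image_of_mem _ hp)
        rwa [hfval p hp] at this
    rw [this, key]
end

section
/- There is a bijection between t-cross resolvable designs and orthogonal arrays: given a t-(v,k,Γ,m,λ_t) resolvable design (V,A) with parallel classes A_1,...,A_m, each A_u = {A_{u,1},...,A_{u,q}} with q = v/k, the v×m array A defined by A(j,u) = v iff j ∈ A_{u,v} is an OA_{λ_t}(m, q, t); conversely, from any OA_{λ_t}(m,q,t) one recovers a t-(λ_t q^t, λ_t q^{t-1}, mq, m, λ_t) resolvable design via A_{u,v} = {j : A(j,u) = v}. -/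
/-- From a `t`-cross `(v,k,Γ,m,λ_t)` resolvable design with parallel classes
`cls u = {cls u 1, …, cls u q}` (each a partition of `V` into `q = v/k` blocks of size
`k`), the array `A` with `A(j,u) = w` iff `j ∈ cls u w` is an `OA_{λ_t}(m,q,t)`:
every `t` columns contain each vector of `[q]^t` exactly `λ_t` times; this forces
`v = λ_t q^t` and `k = λ_t q^{t-1}`. -/
theorem stmt_15 {V : Type*} [Fintype V] [DecidableEq V]
    (v k m q lam t : ℕ)
    (hv : Fintype.card V = v) (hk : 0 < k) (hq : 0 < q)
    (ht : 1 ≤ t) (htm : t ≤ m)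
    (cls : Fin m → Fin q → Finset V)
    (hblockcard : ∀ u w, (cls u w).card = k)
    (hpart : ∀ u, ∀ x : V, ∃! w : Fin q, x ∈ cls u w)
    (hcross : ∀ T : Finset (Fin m), T.card = t → ∀ g : Fin m → Fin q,
      (T.inf fun u => cls u (g u)).card = lam) :
    (∀ T : Finset (Fin m), T.card = t → ∀ w : Fin m → Fin q,
      ((Finset.univ : Finset V).filter fun j => ∀ u ∈ T, j ∈ cls u (w u)).card = lam) ∧
    v = lam * q ^ t ∧ k = lam * q ^ (t - 1) := by
  classical
  have key : ∀ T : Finset (Fin m), T.card = t → ∀ w : Fin m → Fin q,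
      ((Finset.univ : Finset V).filter fun j => ∀ u ∈ T, j ∈ cls u (w u)).card = lam := by
    intro T hT w
    have heq : ((Finset.univ : Finset V).filter fun j => ∀ u ∈ T, j ∈ cls u (w u))
        = T.inf fun u => cls u (w u) := by
      ext x
      simp [Finset.mem_inf]
    rw [heq, hcross T hT w]
  obtain ⟨T, hTsub, hT⟩ :=
    Finset.exists_subset_card_eq (by simpa using htm :
      t ≤ (Finset.univ : Finset (Fin m)).card)
  have main : ∀ n : ℕ, ∀ S : Finset (Fin m), S ⊆ T → S.card + n = t →
      ∀ g : Fin m → Fin q,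
      ((Finset.univ : Finset V).filter fun j => ∀ u ∈ S, j ∈ cls u (g u)).card
        = lam * q ^ n := by
    intro n
    induction n with
    | zero =>
      intro S hST hcard g
      have hS : S = T := Finset.eq_of_subset_of_card_le hST (by omega)
      subst hS
      simpa using key S (by omega) g
    | succ n ih =>
      intro S hST hcard g
      obtain ⟨u0, hu0T, hu0S⟩ : ∃ u0, u0 ∈ T ∧ u0 ∉ S := by
        by_contra h
        push_neg at h
        have hTS : T ⊆ S := fun u hu => h u hu
        have hST2 : S = T := Finset.Subset.antisymm hST hTS
        rw [hST2] at hcard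
        omega
      set A := (Finset.univ : Finset V).filter fun j => ∀ u ∈ S, j ∈ cls u (g u) with hA
      set fw : V → Fin q := fun x => (hpart u0 x).choose with hfw
      have hfwmem : ∀ x : V, x ∈ cls u0 (fw x) := fun x => (hpart u0 x).choose_spec.1
      have hfwuniq : ∀ (x : V) (w : Fin q), x ∈ cls u0 w → fw x = w := by
        intro x w hw
        exact ((hpart u0 x).choose_spec.2 w hw).symm ▸ rfl
      have hfib : A.card = ∑ w : Fin q, (A.filter fun x => fw x = w).card :=
        Finset.card_eq_sum_card_fiberwise (fun x _ => Finset.mem_univ _)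
      have hstep : ∀ w : Fin q, (A.filter fun x => fw x = w).card = lam * q ^ n := by
        intro w
        have heq : (A.filter fun x => fw x = w)
            = (Finset.univ : Finset V).filter
              (fun j => ∀ u ∈ insert u0 S, j ∈ cls u (Function.update g u0 w u)) := by
          ext x
          simp only [hA, Finset.mem_filter, Finset.mem_univ, true_and,
            Finset.mem_insert]
          constructor
          · rintro ⟨hS', hfwx⟩ u hu
            rcases hu with rfl | hu
            · rw [Function.update_self]
              exact hfwx ▸ hfwmem x
            · rw [Function.update_of_ne (by rintro rfl; exact hu0S hu)]
              exact hS' u hu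
          · intro h
            refine ⟨fun u hu => ?_, ?_⟩
            · have := h u (Or.inr hu)
              rwa [Function.update_of_ne (by rintro rfl; exact hu0S hu)] at this
            · have := h u0 (Or.inl rfl)
              rw [Function.update_self] at this
              exact hfwuniq x w this
        rw [heq]
        exact ih (insert u0 S) (Finset.insert_subset hu0T hST)
          (by rw [Finset.card_insert_of_notMem hu0S]; omega) _
      rw [hfib]
      calc (∑ w : Fin q, (A.filter fun x => fw x = w).card)
          = ∑ _w : Fin q, lam * q ^ n := Finset.sum_congr rfl fun w _ => hstep w
        _ = q * (lam * q ^ n) := by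
            rw [Finset.sum_const, Finset.card_univ, Fintype.card_fin, smul_eq_mul]
        _ = lam * q ^ (n + 1) := by ring
  have h0 := main t ∅ (Finset.empty_subset _) (by simp) (fun _ => ⟨0, hq⟩)
  obtain ⟨u0, hu0⟩ := Finset.card_pos.mp (by omega : 0 < T.card)
  have h1 := main (t - 1) {u0} (Finset.singleton_subset_iff.mpr hu0)
    (by simp; omega) (fun _ => ⟨0, hq⟩)
  have heq1 : ((Finset.univ : Finset V).filter fun j => ∀ u ∈ ({u0} : Finset (Fin m)),
      j ∈ cls u ((fun _ => (⟨0, hq⟩ : Fin q)) u)) = cls u0 ⟨0, hq⟩ := by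
    ext x; simp
  rw [heq1, hblockcard] at h1
  refine ⟨key, ?_, h1⟩
  simpa [hv] using h0
end

section
/- Every entry of the user-delivery array vector e constructed in the t-GDD scheme lies in [q]^m and each vector e ∈ [q]^m occurs at most (q-1)^t times in any fixed column of the array; consequently the total number of distinct (vector, occurrence-index) labels S is at most (q-1)^t · q^m. -/
/-!
A block meets each group at most once and the row `A j` avoids the block, so `T` is forced to
be the set of block points on which `e` agrees with the block: `(j, T)` is determined by `j`.
The rows of an orthogonal array are pairwise distinct, and a row that agrees with `e` off the `t`
coordinates of `T` is determined by its values there, each of which avoids one of the `q`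
symbols.
-/

open Finset

section

variable {ι κ α : Type*}

theorem injective_of_card_filter_agree_le_one [Fintype ι] [DecidableEq α] (A : ι → κ → α)
    (cols : Finset κ)
    (hcols : ∀ w : κ → α, (univ.filter fun j => ∀ u ∈ cols, A j u = w u).card ≤ 1) :
    Function.Injective A := by
  intro j j' h
  exact card_le_one.1 (hcols (A j)) j (by simp) j' (by simp [h])

theorem eq_filter_of_subset_of_avoids [DecidableEq κ] [DecidableEq α] {b T : Finset (κ × α)}
    (hb : ∀ u : κ, (b.filter fun p => p.1 = u).card ≤ 1) {x y : κ → α} (hTb : T ⊆ b)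
    (hy : ∀ p ∈ b, y p.1 ≠ p.2) (hxT : ∀ p ∈ T, x p.1 = p.2)
    (hxy : ∀ i, i ∉ T.image Prod.fst → x i = y i) :
    T = b.filter fun p => x p.1 = p.2 := by
  refine Subset.antisymm (fun p hp => mem_filter.2 ⟨hTb hp, hxT p hp⟩) fun p hp => ?_
  obtain ⟨hpb, hpx⟩ := mem_filter.1 hp
  by_cases hpT : p.1 ∈ T.image Prod.fst
  · obtain ⟨p', hp'T, hp'p⟩ := mem_image.1 hpT
    have : p' = p :=
      card_le_one.1 (hb p.1) p' (mem_filter.2 ⟨hTb hp'T, hp'p⟩) p (mem_filter.2 ⟨hpb, rfl⟩)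
    exact this ▸ hp'T
  · exact absurd (hxy p.1 hpT ▸ hpx) (hy p hpb)

theorem card_filter_avoid_and_agree_le [Fintype ι] [Fintype κ] [DecidableEq κ] [Fintype α]
    [DecidableEq α]
    (A : ι → κ → α) (hA : Function.Injective A) (T : Finset (κ × α)) (e : κ → α) :
    (univ.filter fun j => (∀ p ∈ T, A j p.1 ≠ p.2) ∧
        ∀ i, i ∉ T.image Prod.fst → e i = A j i).card ≤ (Fintype.card α - 1) ^ T.card := by
  calc _ ≤ (T.pi fun p => (univ : Finset α).erase p.2).card := by
        refine card_le_card_of_injOn (fun j p _ => A j p.1) (fun j hj => ?_) fun j hj j' hj' h => ?_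
        · simp only [coe_filter, Set.mem_ofPred_eq, mem_univ, true_and] at hj
          simpa [mem_pi] using hj.1
        · simp only [coe_filter, Set.mem_ofPred_eq, mem_univ, true_and] at hj hj'
          refine hA (funext fun i => ?_)
          by_cases hi : i ∈ T.image Prod.fst
          · obtain ⟨p, hp, rfl⟩ := mem_image.1 hi
            exact congrFun (congrFun h p) hp
          · rw [← hj.2 i hi, ← hj'.2 i hi]
    _ = (Fintype.card α - 1) ^ T.card := by
        simp [card_pi, card_erase_of_mem]

end

theorem stmt_19_general (m q s t : ℕ) (hsm : s ≤ m)
    (A : Fin (q ^ s) → Fin m → Fin q)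
    (hOA : ∀ cols : Finset (Fin m), cols.card = s → ∀ w : Fin m → Fin q,
      (Finset.univ.filter fun j => ∀ u ∈ cols, A j u = w u).card = 1)
    (𝔅 : Finset (Finset (Fin m × Fin q)))
    (hbgroup : ∀ b ∈ 𝔅, ∀ u : Fin m, (b.filter fun p => p.1 = u).card ≤ 1) :
    ∀ b ∈ 𝔅, ∀ e : Fin m → Fin q,
      ((Finset.univ : Finset (Fin (q ^ s) × Finset (Fin m × Fin q))).filter
          fun jT => jT.2 ⊆ b ∧ jT.2.card = t ∧
            (∀ p ∈ b, A jT.1 p.1 ≠ p.2) ∧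
            (∀ p ∈ jT.2, e p.1 = p.2) ∧
            (∀ i : Fin m, i ∉ jT.2.image Prod.fst → e i = A jT.1 i)).card
        ≤ (q - 1) ^ t := by
  intro b hb e
  obtain ⟨cols, -, hcols⟩ :=
    exists_subset_card_eq (s := (univ : Finset (Fin m))) (by simpa using hsm)
  have hA := injective_of_card_filter_agree_le_one A cols fun w => by
    -- `convert` reconciles the two `Decidable` instances of the filter predicate
    convert Nat.le_of_eq (hOA cols hcols w)
  set T₀ := b.filter fun p => e p.1 = p.2
  have hT₀ : ∀ j T, T ⊆ b → (∀ p ∈ b, A j p.1 ≠ p.2) →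
      (∀ p ∈ T, e p.1 = p.2) → (∀ i, i ∉ T.image Prod.fst → e i = A j i) → T = T₀ :=
    fun _ _ hTb hy hxT hxy =>
      eq_filter_of_subset_of_avoids (hbgroup b hb) hTb hy hxT hxy
  by_cases hcard : T₀.card = t
  swap
  · refine (card_eq_zero.2 (filter_eq_empty_iff.2 ?_)).trans_le (Nat.zero_le _)
    rintro ⟨j, T⟩ - ⟨hTb, hTt, hy, hxT, hxy⟩
    exact hcard (hT₀ j T hTb hy hxT hxy ▸ hTt)
  calc _ ≤ ((univ.filter fun j => (∀ p ∈ T₀, A j p.1 ≠ p.2) ∧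
          ∀ i, i ∉ T₀.image Prod.fst → e i = A j i) ×ˢ {T₀}).card := by
        refine card_le_card fun ⟨j, T⟩ hjT => ?_
        obtain ⟨-, hTb, -, hy, hxT, hxy⟩ := mem_filter.1 hjT
        obtain rfl := hT₀ j T hTb hy hxT hxy
        simp only [mem_product, mem_filter, mem_univ, true_and, mem_singleton, and_true]
        exact ⟨fun p hp => hy p (hTb hp), hxy⟩
    _ ≤ (Fintype.card (Fin q) - 1) ^ T₀.card := by
        simpa using card_filter_avoid_and_agree_le A hA T₀ e
    _ = (q - 1) ^ t := by rw [Fintype.card_fin, hcard]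

/-- In the `t`-GDD scheme built from an `OA(m,q,s)` `A` and a `t`-`(m,q,L,1)` GDD with
`t ≤ L ≤ s ≤ m`: for a fixed column (block) `b` and a fixed vector `e ∈ [q]^m`, the
number of row labels — pairs `(j, T)` with `j ∈ [q^s]` and `T` a `t`-subset of the block
`b` — producing the vector `e` (i.e. the entry is non-star: `A(j,·)` differs from `b` in
all `L` block coordinates; `e` agrees with the block values on `T` and with `A(j,·)`
elsewhere) is at most `(q-1)^t`. -/
theorem stmt_19 (m q s t L : ℕ) (ht : 1 ≤ t) (htL : t ≤ L) (hLs : L ≤ s) (hsm : s ≤ m)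
    (A : Fin (q ^ s) → Fin m → Fin q)
    (hOA : ∀ cols : Finset (Fin m), cols.card = s → ∀ w : Fin m → Fin q,
      (Finset.univ.filter fun j => ∀ u ∈ cols, A j u = w u).card = 1)
    (𝔅 : Finset (Finset (Fin m × Fin q)))
    (hbcard : ∀ b ∈ 𝔅, b.card = L)
    (hbgroup : ∀ b ∈ 𝔅, ∀ u : Fin m, (b.filter fun p => p.1 = u).card ≤ 1)
    (hGDD : ∀ T : Finset (Fin m × Fin q), T.card = t → (T.image Prod.fst).card = t →
      ∃! b, b ∈ 𝔅 ∧ T ⊆ b) :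
    ∀ b ∈ 𝔅, ∀ e : Fin m → Fin q,
      ((Finset.univ : Finset (Fin (q ^ s) × Finset (Fin m × Fin q))).filter
          fun jT => jT.2 ⊆ b ∧ jT.2.card = t ∧
            (∀ p ∈ b, A jT.1 p.1 ≠ p.2) ∧
            (∀ p ∈ jT.2, e p.1 = p.2) ∧
            (∀ i : Fin m, i ∉ jT.2.image Prod.fst → e i = A jT.1 i)).card
        ≤ (q - 1) ^ t :=
  stmt_19_general m q s t hsm A hOA 𝔅 hbgroup
end
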